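/- For positive integers k1, k2 and all nonnegative n1, n2, the explicit double-indexed formula is symmetric under index-exchange duality: sum_{0<=a,b<=k1+k2} (-1)^{a+b+k1+k2} a! b! (a+1)^{n1} (a+b+2)^{n2} * sum_{h=0}^{k1+k2} S(h,a) S(k1+k2-h, b) C(k2, h-k1) equals sum_{0<=a,b<=n1+n2} (-1)^{a+b+n1+n2} a! b! (a+1)^{k1} (a+b+2)^{k2} * sum_{h=0}^{n1+n2} S(h,a) S(n1+n2-h, b) C(n2, h-n1). -/

import Mathlib

/-!
Write `B_n^{(-k)} = (-1)^n ∑ₘ (-1)^m m! S(n,m) (m+1)^k` for the single-index poly-Bernoulli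
numbers. Expanding `(m₁+1)^{k₁} (m₁+m₂+2)^{k₂} = ∑ₛ C(k₂,s) (m₁+1)^{k₁+s} (m₂+1)^{k₂-s}`
makes the double sum defining `B_{l₁,l₂}^{(-k₁,-k₂)}` factor as
`∑_{t,s} C(l₂,t) C(k₂,s) B_{l₁+t}^{(-(k₁+s))} B_{l₂-t}^{(-(k₂-s))}`,
so the two-index duality reduces to the one-index duality `B_n^{(-k)} = B_k^{(-n)}`.
That one follows from the Arakawa–Kaneko formula `B_n^{(-k)} = ∑ᵢ (i!)² S(n+1,i+1) S(k+1,i+1)`,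
obtained by inserting `(x+1)^k = ∑ᵢ C(x,i) i! S(k+1,i+1)` and summing against
`∑ₘ (-1)^{m+n} C(m,i) m! S(n,m) = i! S(n+1,i+1)`.
-/

/-- Stirling numbers of the second kind. -/
def S2 : ℕ → ℕ → ℕ
  | 0, 0 => 1
  | 0, _ + 1 => 0
  | _ + 1, 0 => 0
  | n + 1, m + 1 => S2 n m + (m + 1) * S2 n (m + 1)
/-- Double-indexed poly-Bernoulli number with negative upper indices
`B_{ℓ1,ℓ2}^{(-k1,-k2)}`, via the explicit formula of Theorem 2.1. -/
def B2negA (l1 l2 k1 k2 : ℕ) : ℤ :=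
  ∑ m1 ∈ Finset.range (l1 + l2 + 1), ∑ m2 ∈ Finset.range (l1 + l2 + 1),
    (-1 : ℤ) ^ (m1 + m2 + l1 + l2) * (Nat.factorial m1 : ℤ) * (Nat.factorial m2 : ℤ) *
      ((m1 : ℤ) + 1) ^ k1 * ((m1 : ℤ) + (m2 : ℤ) + 2) ^ k2 *
      ∑ n ∈ Finset.range (l1 + l2 + 1),
        (S2 n m1 : ℤ) * (S2 (l1 + l2 - n) m2 : ℤ) *
          (if l1 ≤ n then (Nat.choose l2 (n - l1) : ℤ) else 0)
/-- Double-indexed poly-Bernoulli number with negative upper indices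
`B_{n1,n2}^{(-k1,-k2)}`, via the dual explicit formula
`B_{n1,n2}^{(-k1,-k2)} = B_{k1,k2}^{(-n1,-n2)}`. -/
def B2negD (n1 n2 k1 k2 : ℕ) : ℤ :=
  ∑ l1 ∈ Finset.range (k1 + k2 + 1), ∑ l2 ∈ Finset.range (k1 + k2 + 1),
    (-1 : ℤ) ^ (l1 + l2 + k1 + k2) * (Nat.factorial l1 : ℤ) * (Nat.factorial l2 : ℤ) *
      ((l1 : ℤ) + 1) ^ n1 * ((l1 : ℤ) + (l2 : ℤ) + 2) ^ n2 *
      ∑ h ∈ Finset.range (k1 + k2 + 1),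
        (S2 h l1 : ℤ) * (S2 (k1 + k2 - h) l2 : ℤ) *
          (if k1 ≤ h then (Nat.choose k2 (h - k1) : ℤ) else 0)

open Finset Nat

theorem S2_eq_stirlingSecond : ∀ n k, S2 n k = stirlingSecond n k
  | 0, 0 | 0, _ + 1 | _ + 1, 0 => rfl
  | n + 1, k + 1 => by
    rw [S2, stirlingSecond_succ_succ, S2_eq_stirlingSecond n k,
      S2_eq_stirlingSecond n (k + 1), Nat.add_comm]

theorem sum_range_shift_eq_of_boundary {M : Type*} [AddCommMonoid M] (g : ℕ → M) (n : ℕ)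
    (h₀ : g 0 = 0) (hn : g (n + 1) = 0) :
    ∑ k ∈ range (n + 1), g (k + 1) = ∑ k ∈ range (n + 1), g k := by
  have h := (sum_range_succ' g (n + 1)).symm.trans (sum_range_succ g (n + 1))
  rwa [h₀, hn, add_zero, add_zero] at h

theorem sum_range_succ_eq_of_le_of_eq_zero {M : Type*} [AddCommMonoid M] {f : ℕ → M} {a b : ℕ}
    (hab : a ≤ b) (hf : ∀ i, a < i → f i = 0) :
    ∑ i ∈ range (b + 1), f i = ∑ i ∈ range (a + 1), f i :=
  (sum_subset (range_subset_range.mpr (by omega)) fun i hi hi' => hf i (by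
    simp only [mem_range] at hi'; omega)).symm

theorem mul_descFactorial_eq_descFactorial_succ_add (x k : ℕ) :
    x * x.descFactorial k = x.descFactorial (k + 1) + k * x.descFactorial k := by
  rw [descFactorial_succ, ← Nat.add_mul]
  rcases le_or_gt k x with h | h
  · rw [Nat.sub_add_cancel h]
  · simp [descFactorial_eq_zero_iff_lt.mpr h]

theorem pow_eq_sum_descFactorial_mul_stirlingSecond (x n : ℕ) :
    x ^ n = ∑ k ∈ range (n + 1), x.descFactorial k * stirlingSecond n k := by
  induction n with
  | zero => simp
  | succ n ih =>
    have hshift := sum_range_shift_eq_of_boundary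
      (fun k => x.descFactorial k * (k * stirlingSecond n k)) n (by simp)
      (by simp [stirlingSecond_eq_zero_of_lt (lt_add_one n)])
    rw [sum_range_succ', pow_succ', ih, mul_sum]
    simp only [stirlingSecond_succ_succ, stirlingSecond_succ_zero, mul_zero, add_zero,
      Nat.mul_add, sum_add_distrib]
    rw [hshift, ← sum_add_distrib]
    refine sum_congr rfl fun k _ => ?_
    rw [← mul_assoc, mul_descFactorial_eq_descFactorial_succ_add]
    ring

theorem add_one_pow_eq_sum_descFactorial_mul_stirlingSecond (x n : ℕ) :
    (x + 1) ^ n = ∑ k ∈ range (n + 1), x.descFactorial k * stirlingSecond (n + 1) (k + 1) := by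
  have h := pow_eq_sum_descFactorial_mul_stirlingSecond (x + 1) (n + 1)
  simp only [sum_range_succ' _ (n + 1), stirlingSecond_succ_zero, mul_zero, add_zero,
    succ_descFactorial_succ, mul_assoc, ← mul_sum, pow_succ'] at h
  exact Nat.eq_of_mul_eq_mul_left (succ_pos x) h

theorem factorial_mul_stirlingSecond_succ_succ (n m : ℕ) :
    (m + 1)! * stirlingSecond (n + 1) (m + 1)
      = (m + 1) * (m ! * stirlingSecond n m + (m + 1)! * stirlingSecond n (m + 1)) := by
  rw [stirlingSecond_succ_succ, factorial_succ]
  ring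

theorem sum_alternating_choose_mul_factorial_mul_stirlingSecond_succ (n i : ℕ) :
    ∑ m ∈ range (n + 2), (-1 : ℤ) ^ (m + (n + 1)) * m.choose i * m ! * stirlingSecond (n + 1) m
      = ∑ m ∈ range (n + 1), (-1 : ℤ) ^ (m + n) * m ! * stirlingSecond n m
          * ((m + 1) * (m + 1).choose i - m * m.choose i) := by
  have hrec : ∀ m, ((m + 1)! * stirlingSecond (n + 1) (m + 1) : ℤ)
      = (m + 1) * (m ! * stirlingSecond n m + (m + 1)! * stirlingSecond n (m + 1)) := fun m => by
    exact_mod_cast factorial_mul_stirlingSecond_succ_succ n m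
  -- the `(m + 1)! * S(n, m + 1)` half of the recurrence, reindexed down by one
  have hshift := sum_range_shift_eq_of_boundary
    (fun m => (-1 : ℤ) ^ (m + (n + 1)) * m * m.choose i * m ! * stirlingSecond n m) n (by simp)
    (by simp [stirlingSecond_eq_zero_of_lt (lt_add_one n)])
  push_cast at hshift
  rw [sum_range_succ']
  simp only [stirlingSecond_succ_zero, Nat.cast_zero, mul_zero, add_zero]
  calc _ = ∑ m ∈ range (n + 1), (-1 : ℤ) ^ (m + n) * (m + 1) * (m + 1).choose i * m !
              * stirlingSecond n m
          + ∑ m ∈ range (n + 1), (-1 : ℤ) ^ (m + 1 + (n + 1)) * (m + 1) * (m + 1).choose i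
              * (m + 1)! * stirlingSecond n (m + 1) := by
        rw [← sum_add_distrib]
        refine sum_congr rfl fun m _ => ?_
        rw [mul_assoc _ _ (stirlingSecond (n + 1) (m + 1) : ℤ), hrec]
        ring
    _ = _ := by
        rw [hshift, ← sum_add_distrib]
        refine sum_congr rfl fun m _ => ?_
        ring

theorem add_one_mul_choose_succ_succ (m j : ℕ) :
    (m + 1) * (m + 1).choose (j + 1)
      = m * m.choose (j + 1) + (j + 2) * m.choose (j + 1) + (j + 1) * m.choose j := by
  have h := add_one_mul_choose_eq m j
  rw [choose_succ_succ'] at h ⊢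
  linarith

theorem sum_alternating_choose_mul_factorial_mul_stirlingSecond (n i : ℕ) :
    ∑ m ∈ range (n + 1), (-1 : ℤ) ^ (m + n) * m.choose i * m ! * stirlingSecond n m
      = i ! * stirlingSecond (n + 1) (i + 1) := by
  induction n generalizing i with
  | zero => cases i <;> simp [stirlingSecond_eq_zero_of_lt, stirlingSecond_self]
  | succ n ih =>
    rw [sum_alternating_choose_mul_factorial_mul_stirlingSecond_succ]
    cases i with
    | zero =>
      simp only [choose_zero_right, Nat.cast_one, mul_one, add_sub_cancel_left]
      simpa [stirlingSecond_one_right] using ih 0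
    | succ j =>
      have hchoose : ∀ m : ℕ, ((m + 1) * (m + 1).choose (j + 1) - m * m.choose (j + 1) : ℤ)
          = (j + 2) * m.choose (j + 1) + (j + 1) * m.choose j := fun m => by
        have := congrArg (Nat.cast : ℕ → ℤ) (add_one_mul_choose_succ_succ m j)
        push_cast at this
        linarith
      calc _ = (j + 2) * ∑ m ∈ range (n + 1), (-1 : ℤ) ^ (m + n) * m.choose (j + 1) * m !
                  * stirlingSecond n m
              + (j + 1) * ∑ m ∈ range (n + 1), (-1 : ℤ) ^ (m + n) * m.choose j * m !
                  * stirlingSecond n m := by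
            rw [mul_sum, mul_sum, ← sum_add_distrib]
            refine sum_congr rfl fun m _ => ?_
            rw [hchoose]
            ring
        _ = _ := by
            rw [ih, ih, stirlingSecond_succ_succ (n + 1) (j + 1), factorial_succ]
            push_cast
            ring

theorem add_one_pow_eq_sum_choose_mul_factorial_mul_stirlingSecond (x n : ℕ) :
    ((x : ℤ) + 1) ^ n
      = ∑ i ∈ range (n + 1), (x.choose i : ℤ) * i ! * stirlingSecond (n + 1) (i + 1) := by
  have h := add_one_pow_eq_sum_descFactorial_mul_stirlingSecond x n
  simp only [descFactorial_eq_factorial_mul_choose] at h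
  rw [← Nat.cast_inj (R := ℤ)] at h
  push_cast at h
  rw [h]
  exact sum_congr rfl fun i _ => by ring

/-- The poly-Bernoulli number `B_n^{(-k)}`, by its closed formula. -/
def negPolyBernoulli (n k : ℕ) : ℤ :=
  ∑ m ∈ range (n + 1), (-1 : ℤ) ^ (m + n) * m ! * stirlingSecond n m * ((m : ℤ) + 1) ^ k

theorem negPolyBernoulli_eq_sum_factorial_mul_stirlingSecond (n k : ℕ) :
    negPolyBernoulli n k = ∑ i ∈ range (k + 1),
      (i ! * stirlingSecond (n + 1) (i + 1) : ℤ) * (i ! * stirlingSecond (k + 1) (i + 1)) := by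
  simp only [negPolyBernoulli, add_one_pow_eq_sum_choose_mul_factorial_mul_stirlingSecond,
    mul_sum]
  rw [sum_comm]
  refine sum_congr rfl fun i _ => ?_
  rw [← sum_alternating_choose_mul_factorial_mul_stirlingSecond n i, sum_mul]
  exact sum_congr rfl fun m _ => by ring

theorem negPolyBernoulli_comm (n k : ℕ) : negPolyBernoulli n k = negPolyBernoulli k n := by
  have hvanish : ∀ {a i : ℕ}, a < i → (i ! * stirlingSecond (a + 1) (i + 1) : ℤ) = 0 :=
    fun h => by simp [stirlingSecond_eq_zero_of_lt (Nat.add_lt_add_right h 1)]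
  rw [negPolyBernoulli_eq_sum_factorial_mul_stirlingSecond,
    negPolyBernoulli_eq_sum_factorial_mul_stirlingSecond]
  rcases le_total n k with h | h <;>
  · rw [sum_range_succ_eq_of_le_of_eq_zero h fun i hi => by rw [hvanish hi, zero_mul]]
    exact sum_congr rfl fun i _ => mul_comm _ _

theorem sum_range_eq_negPolyBernoulli {n N : ℕ} (hN : n ≤ N) (k : ℕ) :
    ∑ m ∈ range (N + 1), (-1 : ℤ) ^ (m + n) * m ! * stirlingSecond n m * ((m : ℤ) + 1) ^ k
      = negPolyBernoulli n k :=
  sum_range_succ_eq_of_le_of_eq_zero hN fun m hm => by simp [stirlingSecond_eq_zero_of_lt hm]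

theorem sum_sum_mul_sum_sum_swap {R : Type*} [CommSemiring R] (I J T S : Finset ℕ)
    (a b c d : ℕ → ℕ → R) :
    ∑ i ∈ I, ∑ j ∈ J, (∑ t ∈ T, a t i * b t j) * (∑ s ∈ S, c s i * d s j)
      = ∑ t ∈ T, ∑ s ∈ S, (∑ i ∈ I, a t i * c s i) * (∑ j ∈ J, b t j * d s j) := by
  simp only [sum_mul_sum]
  simp_rw [sum_comm (s := J), sum_comm (s := I)]
  exact sum_congr rfl fun t _ => sum_congr rfl fun s _ =>
    sum_congr rfl fun i _ => sum_congr rfl fun j _ => by ring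

theorem sum_range_add_mul_ite_choose {R : Type*} [CommSemiring R] (a b : ℕ) (f : ℕ → R) :
    ∑ h ∈ range (a + b + 1), f h * (if a ≤ h then (b.choose (h - a) : R) else 0)
      = ∑ t ∈ range (b + 1), f (a + t) * b.choose t := by
  rw [add_assoc, sum_range_add,
    sum_eq_zero fun h hh => by simp [(mem_range.mp hh).not_ge], zero_add]
  simp

theorem add_one_pow_mul_add_add_two_pow_eq_sum {R : Type*} [CommSemiring R] (x y : R)
    (k₁ k₂ : ℕ) :
    (x + 1) ^ k₁ * (x + y + 2) ^ k₂
      = ∑ s ∈ range (k₂ + 1), (k₂.choose s : R) * (x + 1) ^ (k₁ + s) * (y + 1) ^ (k₂ - s) := by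
  rw [show x + y + 2 = (x + 1) + (y + 1) by ring, add_pow (x + 1), mul_sum]
  exact sum_congr rfl fun s _ => by ring

theorem B2negA_eq_sum_negPolyBernoulli (l1 l2 k1 k2 : ℕ) :
    B2negA l1 l2 k1 k2 = ∑ t ∈ range (l2 + 1), ∑ s ∈ range (k2 + 1),
      l2.choose t * k2.choose s
        * (negPolyBernoulli (l1 + t) (k1 + s) * negPolyBernoulli (l2 - t) (k2 - s)) := by
  have hsign : ∀ t ∈ range (l2 + 1), ∀ m1 m2 : ℕ,
      (-1 : ℤ) ^ (m1 + m2 + l1 + l2) = (-1) ^ (m1 + (l1 + t)) * (-1) ^ (m2 + (l2 - t)) :=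
    fun t ht m1 m2 => by
      rw [← pow_add]; congr 1; have := mem_range.mp ht; omega
  have hsplit : ∀ m1 m2 : ℕ,
      ∑ t ∈ range (l2 + 1), l2.choose t * ((-1 : ℤ) ^ (m1 + (l1 + t)) * m1 !
          * stirlingSecond (l1 + t) m1) * ((-1 : ℤ) ^ (m2 + (l2 - t)) * m2 !
          * stirlingSecond (l2 - t) m2)
        = (-1 : ℤ) ^ (m1 + m2 + l1 + l2) * m1 ! * m2 ! * ∑ t ∈ range (l2 + 1),
            (stirlingSecond (l1 + t) m1 : ℤ) * stirlingSecond (l2 - t) m2 * l2.choose t :=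
    fun m1 m2 => by
      rw [mul_sum]
      exact sum_congr rfl fun t ht => by rw [hsign t ht]; ring
  have hsummand : ∀ m1 m2 : ℕ,
      (-1 : ℤ) ^ (m1 + m2 + l1 + l2) * m1 ! * m2 ! * ((m1 : ℤ) + 1) ^ k1
        * ((m1 : ℤ) + m2 + 2) ^ k2 * ∑ t ∈ range (l2 + 1),
            (stirlingSecond (l1 + t) m1 : ℤ) * stirlingSecond (l2 - t) m2 * l2.choose t
      = (∑ t ∈ range (l2 + 1), l2.choose t * ((-1 : ℤ) ^ (m1 + (l1 + t)) * m1 !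
            * stirlingSecond (l1 + t) m1) * ((-1 : ℤ) ^ (m2 + (l2 - t)) * m2 !
            * stirlingSecond (l2 - t) m2))
        * ∑ s ∈ range (k2 + 1),
            (k2.choose s * ((m1 : ℤ) + 1) ^ (k1 + s)) * ((m2 : ℤ) + 1) ^ (k2 - s) :=
    fun m1 m2 => by rw [hsplit, ← add_one_pow_mul_add_add_two_pow_eq_sum]; ring
  unfold B2negA
  simp only [S2_eq_stirlingSecond, sum_range_add_mul_ite_choose, Nat.add_sub_add_left, hsummand]
  rw [sum_sum_mul_sum_sum_swap]
  refine sum_congr rfl fun t ht => sum_congr rfl fun s _ => ?_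
  have ht : t ≤ l2 := mem_range_succ_iff.mp ht
  rw [← sum_range_eq_negPolyBernoulli (N := l1 + l2) (by omega),
    ← sum_range_eq_negPolyBernoulli (N := l1 + l2) (by omega), sum_mul_sum, sum_mul_sum, mul_sum]
  exact sum_congr rfl fun i _ => by rw [mul_sum]; exact sum_congr rfl fun j _ => by ring

theorem doublePolyBernoulli_explicit_duality_general (k1 k2 : ℕ) (n1 n2 : ℕ) :
    B2negD n1 n2 k1 k2 = B2negA n1 n2 k1 k2 := by
  change B2negA k1 k2 n1 n2 = B2negA n1 n2 k1 k2
  rw [B2negA_eq_sum_negPolyBernoulli, B2negA_eq_sum_negPolyBernoulli, sum_comm]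
  refine sum_congr rfl fun t _ => sum_congr rfl fun s _ => ?_
  rw [negPolyBernoulli_comm (k1 + s), negPolyBernoulli_comm (k2 - s)]
  ring

/-- The explicit double-indexed formula is symmetric under index-exchange
duality. -/
theorem doublePolyBernoulli_explicit_duality (k1 k2 : ℕ)
    (hk1 : 0 < k1) (hk2 : 0 < k2) (n1 n2 : ℕ) :
    B2negD n1 n2 k1 k2 = B2negA n1 n2 k1 k2 :=
  doublePolyBernoulli_explicit_duality_general k1 k2 n1 n2
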